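/- arXiv:1703.05073 — 2 statements merged into one kernel-verified Lean document; each statement's English description precedes it below -/
import Mathlib

section
/- For any complex numbers α, β, the map d: tsns → tsns defined by d(L_n)=αnM_n, d(G_s)=αsM_s, d(Y_p)=βY_p, d(M_p)=2βM_p (for n∈ℤ, s∈1/2+ℤ, p∈(1/2)ℤ) is an even derivation of tsns, i.e. d([x,y])=[x,d(y)]−(−1)^{[y][x]}[y,d(x)] for all homogeneous x,y ∈ tsns. -/
open Finsupp

/-- Basis indices of the twisted `N = 1` Schrödinger–Neveu–Schwarz algebra.
`L n` is `L_n` (`n ∈ ℤ`), `G k` is `G_{k+1/2}` (`k ∈ ℤ`),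
`Y k` is `Y_{k/2}` and `M k` is `M_{k/2}` (`k ∈ ℤ`, so `k/2` ranges over `(1/2)ℤ`). -/
inductive TIdx : Type
  | L : ℤ → TIdx
  | G : ℤ → TIdx
  | Y : ℤ → TIdx
  | M : ℤ → TIdx
  deriving DecidableEq

noncomputable section

/-- The underlying vector space of `tsns`: the free `ℂ`-vector space on the basis. -/
abbrev Tsns : Type := TIdx →₀ ℂ

/-- The basis vectors. -/
def bs (i : TIdx) : Tsns := Finsupp.single i 1

/-- The `ℤ₂`-parity of a basis vector. -/
def parity : TIdx → ZMod 2
  | .L _ => 0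
  | .G _ => 1
  | .Y k => (k : ZMod 2)
  | .M k => (k : ZMod 2)

/-- The sign `(-1)^{ab}` for parities `a, b`. -/
def sg (a b : ZMod 2) : ℂ := if a = 1 ∧ b = 1 then -1 else 1

/-- The super-bracket of `tsns` on basis vectors. -/
def brIdx : TIdx → TIdx → Tsns
  | .L n, .L m => ((m : ℂ) - n) • bs (.L (n + m))
  | .L n, .G k => ((k : ℂ) + 1/2 - n/2) • bs (.G (k + n))
  | .G k, .L n => (-((k : ℂ) + 1/2 - n/2)) • bs (.G (k + n))
  | .L n, .Y k => (if (k : ZMod 2) = 0 then ((k : ℂ) - n)/2 else (k : ℂ)/2) • bs (.Y (k + 2*n))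
  | .Y k, .L n => (-(if (k : ZMod 2) = 0 then ((k : ℂ) - n)/2 else (k : ℂ)/2)) • bs (.Y (k + 2*n))
  | .L n, .M k => (if (k : ZMod 2) = 0 then (k : ℂ)/2 else ((k : ℂ) + n)/2) • bs (.M (k + 2*n))
  | .M k, .L n => (-(if (k : ZMod 2) = 0 then (k : ℂ)/2 else ((k : ℂ) + n)/2)) • bs (.M (k + 2*n))
  | .G k, .G l => (2 : ℂ) • bs (.L (k + l + 1))
  | .G l, .Y k => (if (k : ZMod 2) = 0 then ((k : ℂ) - 2*l - 1)/4 else 2) • bs (.Y (k + 2*l + 1))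
  | .Y k, .G l => (if (k : ZMod 2) = 0 then -(((k : ℂ) - 2*l - 1)/4) else 2) • bs (.Y (k + 2*l + 1))
  | .G l, .M k => (if (k : ZMod 2) = 0 then (k : ℂ)/4 else 2) • bs (.M (k + 2*l + 1))
  | .M k, .G l => (if (k : ZMod 2) = 0 then -((k : ℂ)/4) else 2) • bs (.M (k + 2*l + 1))
  | .Y k, .Y l =>
      (if (k : ZMod 2) = 0 then (if (l : ZMod 2) = 0 then ((l : ℂ) - k)/4 else (l : ℂ)/4)
       else (if (l : ZMod 2) = 0 then -((k : ℂ)/4) else 2)) • bs (.M (k + l))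
  | _, _ => 0

/-- The super-bracket of `tsns`, as a bilinear map. -/
def brk : Tsns →ₗ[ℂ] Tsns →ₗ[ℂ] Tsns :=
  Finsupp.lsum ℂ fun i => LinearMap.toSpanSingleton ℂ _
    (Finsupp.lsum ℂ fun j => LinearMap.toSpanSingleton ℂ Tsns (brIdx i j))

/-- `x` is homogeneous of parity `σ`. -/
def IsHom (σ : ZMod 2) (x : Tsns) : Prop := ∀ i ∈ x.support, parity i = σ

/-- The tensor square `tsns ⊗ tsns`, modelled as the free vector space on pairs
of basis indices. -/
abbrev T2 : Type := (TIdx × TIdx) →₀ ℂ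

/-- The tensor cube `tsns ⊗ tsns ⊗ tsns`. -/
abbrev T3 : Type := (TIdx × TIdx × TIdx) →₀ ℂ

/-- The tensor product map `tsns × tsns → tsns ⊗ tsns`. -/
def tp : Tsns →ₗ[ℂ] Tsns →ₗ[ℂ] T2 :=
  Finsupp.lsum ℂ fun i => LinearMap.toSpanSingleton ℂ _
    (Finsupp.lsum ℂ fun j => LinearMap.toSpanSingleton ℂ T2 (Finsupp.single (i, j) 1))

/-- The tensor product map `tsns × tsns × tsns → tsns ⊗ tsns ⊗ tsns`. -/
def t3 : Tsns →ₗ[ℂ] Tsns →ₗ[ℂ] Tsns →ₗ[ℂ] T3 :=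
  Finsupp.lsum ℂ fun i => LinearMap.toSpanSingleton ℂ _
    (Finsupp.lsum ℂ fun j => LinearMap.toSpanSingleton ℂ _
      (Finsupp.lsum ℂ fun k => LinearMap.toSpanSingleton ℂ T3 (Finsupp.single (i, j, k) 1)))

/-- The adjoint diagonal action of `tsns` on `tsns ⊗ tsns`:
`x ∗ (a ⊗ b) = [x,a] ⊗ b + (-1)^{[x][a]} a ⊗ [x,b]`. -/
def star2 : Tsns →ₗ[ℂ] T2 →ₗ[ℂ] T2 :=
  Finsupp.lsum ℂ fun i => LinearMap.toSpanSingleton ℂ _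
    (Finsupp.lsum ℂ fun p => LinearMap.toSpanSingleton ℂ T2
      (tp (brIdx i p.1) (bs p.2) + sg (parity i) (parity p.1) • tp (bs p.1) (brIdx i p.2)))

/-- The adjoint diagonal action of `tsns` on `tsns ⊗ tsns ⊗ tsns`. -/
def star3 : Tsns →ₗ[ℂ] T3 →ₗ[ℂ] T3 :=
  Finsupp.lsum ℂ fun i => LinearMap.toSpanSingleton ℂ _
    (Finsupp.lsum ℂ fun t => LinearMap.toSpanSingleton ℂ T3
      (t3 (brIdx i t.1) (bs t.2.1) (bs t.2.2)
        + sg (parity i) (parity t.1) • t3 (bs t.1) (brIdx i t.2.1) (bs t.2.2)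
        + (sg (parity i) (parity t.1) * sg (parity i) (parity t.2.1)) •
            t3 (bs t.1) (bs t.2.1) (brIdx i t.2.2)))

/-- The super-twist map `τ(x ⊗ y) = (-1)^{[x][y]} y ⊗ x`. -/
def tau : T2 →ₗ[ℂ] T2 :=
  Finsupp.lsum ℂ fun p => LinearMap.toSpanSingleton ℂ T2
    (sg (parity p.1) (parity p.2) • Finsupp.single (p.2, p.1) 1)

/-- The super-cyclic map `ξ(x₁ ⊗ x₂ ⊗ x₃) = (-1)^{[x₁]([x₂]+[x₃])} x₂ ⊗ x₃ ⊗ x₁`. -/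
def xi : T3 →ₗ[ℂ] T3 :=
  Finsupp.lsum ℂ fun t => LinearMap.toSpanSingleton ℂ T3
    (sg (parity t.1) (parity t.2.1 + parity t.2.2) • Finsupp.single (t.2.1, t.2.2, t.1) 1)

/-- `Im(1⊗1 - τ) ⊆ tsns ⊗ tsns`. -/
def ImSkew : Submodule ℂ T2 := LinearMap.range (LinearMap.id - tau)

/-- `ℂ M₀ ⊗ M₀`, the tensor square of the center. -/
def CC : Submodule ℂ T2 := Submodule.span ℂ {Finsupp.single (TIdx.M 0, TIdx.M 0) 1}

/-- The `(1/2)ℤ`-degree of a basis vector, recorded in half-units (i.e. twice the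
degree, an integer). -/
def hdeg : TIdx → ℤ
  | .L n => 2*n
  | .G k => 2*k + 1
  | .Y k => k
  | .M k => k

/-- The degree (in half-units) of a basis vector of the tensor square. -/
def hdeg2 (p : TIdx × TIdx) : ℤ := hdeg p.1 + hdeg p.2

/-- `d : tsns → tsns ⊗ tsns` is a homogeneous derivation of `ℤ₂`-parity `π`:
`d [x,y] = (-1)^{[d][x]} x ∗ d y - (-1)^{[y]([d]+[x])} y ∗ d x`
(stated on homogeneous basis vectors). -/
def IsDerP (π : ZMod 2) (d : Tsns →ₗ[ℂ] T2) : Prop :=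
  ∀ i j : TIdx, d (brk (bs i) (bs j)) =
    sg π (parity i) • star2 (bs i) (d (bs j))
      - sg (parity j) (π + parity i) • star2 (bs j) (d (bs i))

/-- An even derivation `tsns → tsns ⊗ tsns`. -/
def IsDer2 (d : Tsns →ₗ[ℂ] T2) : Prop := IsDerP 0 d

/-- The special derivations `d^♮` on basis vectors (parameters `α, α†, β, β†`). -/
def dnatB (a a' b b' : ℂ) : TIdx → T2
  | .L n => (a * n) • Finsupp.single (.M 0, .M (2*n)) 1
      + (a' * n) • Finsupp.single (.M (2*n), .M 0) 1
  | .G k => (a * ((k : ℂ) + 1/2)) • Finsupp.single (.M 0, .M (2*k+1)) 1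
      + (a' * ((k : ℂ) + 1/2)) • Finsupp.single (.M (2*k+1), .M 0) 1
  | .Y k => b • Finsupp.single (.M 0, .Y k) 1 + b' • Finsupp.single (.Y k, .M 0) 1
  | .M k => (2*b) • Finsupp.single (.M 0, .M k) 1 + (2*b') • Finsupp.single (.M k, .M 0) 1

/-- The special derivations `d^♮ : tsns → tsns ⊗ tsns`. -/
def dnat (a a' b b' : ℂ) : Tsns →ₗ[ℂ] T2 :=
  Finsupp.lsum ℂ fun i => LinearMap.toSpanSingleton ℂ T2 (dnatB a a' b b' i)

/-- Multiplication by `(-1)^{σ·[u]}` on `tsns ⊗ tsns`. -/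
def twT2 (σ : ZMod 2) : T2 →ₗ[ℂ] T2 :=
  Finsupp.lsum ℂ fun p => LinearMap.toSpanSingleton ℂ T2
    (sg σ (parity p.1 + parity p.2) • Finsupp.single p 1)

/-- The coboundary `Δ_r (x) = (-1)^{[r][x]} x ∗ r`. -/
def Δr (r : T2) : Tsns →ₗ[ℂ] T2 :=
  Finsupp.lsum ℂ fun i => LinearMap.toSpanSingleton ℂ T2 (star2 (bs i) (twT2 (parity i) r))

/-- The embedding `tsns ⊗ (tsns ⊗ tsns) → tsns ⊗ tsns ⊗ tsns`. -/
def t13 : Tsns →ₗ[ℂ] T2 →ₗ[ℂ] T3 :=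
  Finsupp.lsum ℂ fun i => LinearMap.toSpanSingleton ℂ _
    (Finsupp.lsum ℂ fun q => LinearMap.toSpanSingleton ℂ T3 (Finsupp.single (i, q.1, q.2) 1))

/-- `1 ⊗ D : tsns ⊗ tsns → tsns ⊗ tsns ⊗ tsns` for an (even) linear map `D`. -/
def oneTensor (D : Tsns →ₗ[ℂ] T2) : T2 →ₗ[ℂ] T3 :=
  Finsupp.lsum ℂ fun p => LinearMap.toSpanSingleton ℂ T3 (t13 (bs p.1) (D (bs p.2)))

/-- The summand of `c(r)` coming from a pair of basis tensors
`p = a_i ⊗ b_i`, `q = a_j ⊗ b_j`. -/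
def cB (p q : TIdx × TIdx) : T3 :=
  sg (parity q.1) (parity p.2) • t3 (brIdx p.1 q.1) (bs p.2) (bs q.2)
    + t3 (bs p.1) (brIdx p.2 q.1) (bs q.2)
    + sg (parity q.1) (parity p.2) • t3 (bs p.1) (bs q.1) (brIdx p.2 q.2)

/-- `c` as a bilinear map. -/
def cY : T2 →ₗ[ℂ] T2 →ₗ[ℂ] T3 :=
  Finsupp.lsum ℂ fun p => LinearMap.toSpanSingleton ℂ _
    (Finsupp.lsum ℂ fun q => LinearMap.toSpanSingleton ℂ T3 (cB p q))

/-- `c(r) = [r¹²,r¹³] + [r¹²,r²³] + [r¹³,r²³]`. -/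
def cr (r : T2) : T3 := cY r r

/-- `(tsns, [·,·], D)` is a Lie superbialgebra: `Im D ⊆ Im(1⊗1−τ)`, the super
co-Jacobi identity holds, and `D` is a 1-cocycle. -/
def IsSuperBialg (D : Tsns →ₗ[ℂ] T2) : Prop :=
  (∀ x : Tsns, D x ∈ ImSkew) ∧
  (∀ x : Tsns,
    oneTensor D (D x) + xi (oneTensor D (D x)) + xi (xi (oneTensor D (D x))) = 0) ∧
  (∀ i j : TIdx, D (brk (bs i) (bs j)) =
    star2 (bs i) (D (bs j)) - sg (parity i) (parity j) • star2 (bs j) (D (bs i)))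

end

noncomputable section

/-- The map `d` on basis vectors: `d(L_n) = αnM_n`, `d(G_s) = αsM_s`,
`d(Y_p) = βY_p`, `d(M_p) = 2βM_p`. -/
def dAB (a b : ℂ) : TIdx → Tsns
  | .L n => (a * n) • bs (.M (2*n))
  | .G k => (a * ((k : ℂ) + 1/2)) • bs (.M (2*k+1))
  | .Y k => b • bs (.Y k)
  | .M k => (2*b) • bs (.M k)

/-- The linear map `d : tsns → tsns` determined by `dAB`. -/
def dA (a b : ℂ) : Tsns →ₗ[ℂ] Tsns :=
  Finsupp.lsum ℂ fun i => LinearMap.toSpanSingleton ℂ Tsns (dAB a b i)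

end

/-!
Both sides are linear in `x` and in `y`, and for homogeneous `x`, `y` the sign `sg σ' σ` is
`sg (parity j) (parity i)` for all basis vectors `bs i`, `bs j` in their supports. So the identity
reduces to pairs of basis vectors, where it is a finite check of the structure constants, split
by the parities of the indices of `Y` and `M`.
-/

namespace Finsupp

variable {R M α : Type*} [Semiring R] [AddCommMonoid M] [Module R M]

theorem linearMap_apply_eq_of_forall_mem_support {F G : (α →₀ R) →ₗ[R] M} {x : α →₀ R}
    (h : ∀ i ∈ x.support, F (single i 1) = G (single i 1)) : F x = G x := by
  refine LinearMap.eqOn_span ?_ ((supported_eq_span_single R _).le (mem_supported_support R x))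
  rintro _ ⟨i, hi, rfl⟩
  exact h i hi

end Finsupp

@[simp] lemma dA_bs (a b : ℂ) (i : TIdx) : dA a b (bs i) = dAB a b i := by
  simp [dA, bs]

@[simp] lemma brk_bs (i j : TIdx) : brk (bs i) (bs j) = brIdx i j := by
  simp [brk, bs]

lemma zmod_two_eq_one_iff : ∀ x : ZMod 2, x = 1 ↔ x ≠ 0 := by decide

lemma dA_brk_bs (a b : ℂ) (i j : TIdx) :
    dA a b (brk (bs i) (bs j)) =
      brk (bs i) (dA a b (bs j)) - sg (parity j) (parity i) • brk (bs j) (dA a b (bs i)) := by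
  cases i <;> cases j <;>
    simp [brIdx, dAB, parity, sg, smul_smul, CharTwo.two_eq_zero, zmod_two_eq_one_iff] <;>
    (try split_ifs) <;> (try simp [dAB, smul_smul]) <;> (try ring_nf) <;>
    first | module | tauto

/-- for any `α, β ∈ ℂ` the map `d` with `d(L_n)=αnM_n`, `d(G_s)=αsM_s`,
`d(Y_p)=βY_p`, `d(M_p)=2βM_p` is an even derivation of `tsns`:
`d [x,y] = [x, d y] - (-1)^{[y][x]} [y, d x]` for all homogeneous `x, y`. -/
theorem dA_is_even_derivation (a b : ℂ) :
    ∀ (σ σ' : ZMod 2) (x y : Tsns), IsHom σ x → IsHom σ' y →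
      dA a b (brk x y) = brk x (dA a b y) - sg σ' σ • brk y (dA a b x) := by
  intro σ σ' x y hx hy
  refine Finsupp.linearMap_apply_eq_of_forall_mem_support (F := dA a b ∘ₗ brk.flip y)
    (G := brk.flip (dA a b y) - sg σ' σ • (brk y ∘ₗ dA a b)) fun i hi => ?_
  refine Finsupp.linearMap_apply_eq_of_forall_mem_support (F := dA a b ∘ₗ brk (bs i))
    (G := brk (bs i) ∘ₗ dA a b - sg σ' σ • brk.flip (dA a b (bs i))) fun j hj => ?_
  rw [← hx i hi, ← hy j hj]
  exact dA_brk_bs a b i j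
end

section
/- If v ∈ tsns^{⊗n} (n ≥ 1) satisfies x∗v = 0 for all x ∈ tsns under the adjoint diagonal action, then v ∈ (ℂM_0)^{⊗n}. -/
open Finsupp

noncomputable section

/-- The `n`-fold tensor power `tsns^{⊗n}`, modelled as the free vector space on
`n`-tuples of basis indices. -/
abbrev TN (n : ℕ) : Type := (Fin n → TIdx) →₀ ℂ

/-- Insertion of an element of `tsns` into slot `k` of a basis pure tensor `f`. -/
def insN {n : ℕ} (f : Fin n → TIdx) (k : Fin n) : Tsns →ₗ[ℂ] TN n :=
  Finsupp.lsum ℂ fun j =>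
    LinearMap.toSpanSingleton ℂ (TN n) (Finsupp.single (Function.update f k j) 1)

/-- The adjoint diagonal action of `tsns` on `tsns^{⊗n}`:
`x ∗ (v₁⊗⋯⊗v_n) = Σ_k (-1)^{[x]([v₁]+⋯+[v_{k-1}])} v₁⊗⋯⊗[x,v_k]⊗⋯⊗v_n`. -/
def starN (n : ℕ) : Tsns →ₗ[ℂ] TN n →ₗ[ℂ] TN n :=
  Finsupp.lsum ℂ fun i => LinearMap.toSpanSingleton ℂ _
    (Finsupp.lsum ℂ fun f => LinearMap.toSpanSingleton ℂ (TN n)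
      (∑ k : Fin n,
        (∏ j ∈ Finset.univ.filter (fun j => j < k), sg (parity i) (parity (f j))) •
          insN f k (brIdx i (f k))))

end

/- Bracketing with `L_m` shifts the half-degree of a basis vector by `2m` and
scales it by a coefficient that, as a function of `m`, vanishes at most once unless the
vector is `M_0`. Let `f` be a basis tensor in the support of `v` with a slot `k` not
equal to `M_0`. For `m` larger than every half-degree occurring in `v`, the basis tensor
obtained from `f` by shifting slot `k` arises in `L_m ∗ v` only from `(f, k)` itself, so
its coefficient is `v f` times a nonzero number; hence `v f = 0`. -/

noncomputable section

def shiftL (m : ℤ) : TIdx → TIdx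
  | .L a => .L (m + a)
  | .G a => .G (a + m)
  | .Y a => .Y (a + 2*m)
  | .M a => .M (a + 2*m)

def coeffL (m : ℤ) : TIdx → ℂ
  | .L a => (a : ℂ) - m
  | .G a => (a : ℂ) + 1/2 - m/2
  | .Y a => if (a : ZMod 2) = 0 then ((a : ℂ) - m)/2 else (a : ℂ)/2
  | .M a => if (a : ZMod 2) = 0 then (a : ℂ)/2 else ((a : ℂ) + m)/2

end

lemma brIdx_L (m : ℤ) (i : TIdx) : brIdx (.L m) i = coeffL m i • bs (shiftL m i) := by
  cases i <;> rfl

lemma shiftL_injective (m : ℤ) : Function.Injective (shiftL m) := by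
  intro i j hij
  cases i <;> cases j <;> simp_all [shiftL]

lemma hdeg_shiftL (m : ℤ) (i : TIdx) : hdeg (shiftL m i) = hdeg i + 2*m := by
  cases i <;> simp [shiftL, hdeg] <;> ring

lemma eq_of_coeffL_eq_zero {i : TIdx} (hi : i ≠ .M 0) {m m' : ℤ}
    (hm : coeffL m i = 0) (hm' : coeffL m' i = 0) : m = m' := by
  cases i with
  | L a =>
    simp only [coeffL] at hm hm'
    exact_mod_cast (by linear_combination hm' - hm : (m : ℂ) = m')
  | G a =>
    simp only [coeffL] at hm hm'
    exact_mod_cast (by linear_combination 2 * (hm' - hm) : (m : ℂ) = m')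
  | Y a =>
    simp only [coeffL] at hm hm'
    split_ifs at hm hm' with ha
    · exact_mod_cast (by linear_combination 2 * (hm' - hm) : (m : ℂ) = m')
    · obtain rfl : a = 0 := by exact_mod_cast (by linear_combination 2 * hm : (a : ℂ) = 0)
      exact absurd rfl ha
  | M a =>
    simp only [coeffL] at hm hm'
    split_ifs at hm hm' with ha
    · obtain rfl : a = 0 := by exact_mod_cast (by linear_combination 2 * hm : (a : ℂ) = 0)
      exact absurd rfl hi
    · exact_mod_cast (by linear_combination 2 * (hm - hm') : (m : ℂ) = m')

lemma exists_lt_coeffL_ne_zero (B : ℤ) {i : TIdx} (hi : i ≠ .M 0) :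
    ∃ m : ℤ, B < m ∧ coeffL m i ≠ 0 := by
  by_contra! h
  have := eq_of_coeffL_eq_zero hi (h (B + 1) (by omega)) (h (B + 2) (by omega))
  omega

lemma sg_zero_left (b : ZMod 2) : sg 0 b = 1 := by
  simp [sg]

lemma insN_bs {n : ℕ} (f : Fin n → TIdx) (k : Fin n) (j : TIdx) :
    insN f k (bs j) = Finsupp.single (Function.update f k j) 1 := by
  rw [insN, bs, Finsupp.lsum_single, LinearMap.toSpanSingleton_apply, one_smul]

lemma starN_L_apply {n : ℕ} (m : ℤ) (v : TN n) (g : Fin n → TIdx) :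
    starN n (bs (.L m)) v g =
      ∑ f ∈ v.support, v f * ∑ k : Fin n,
        coeffL m (f k) * (if Function.update f k (shiftL m (f k)) = g then 1 else 0) := by
  rw [starN, bs, Finsupp.lsum_single, LinearMap.toSpanSingleton_apply, one_smul,
    Finsupp.lsum_apply, Finsupp.sum, Finsupp.finsetSum_apply]
  refine Finset.sum_congr rfl fun f _ => ?_
  rw [LinearMap.toSpanSingleton_apply, Finsupp.smul_apply, smul_eq_mul, Finsupp.finsetSum_apply]
  congr 1
  refine Finset.sum_congr rfl fun k _ => ?_
  simp only [show parity (.L m) = 0 from rfl, sg_zero_left, Finset.prod_const_one, one_smul]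
  rw [brIdx_L, map_smul, Finsupp.smul_apply, insN_bs, smul_eq_mul, Finsupp.single_apply]

lemma eq_of_update_shiftL_eq {n B : ℕ} {m : ℤ} (hm : (B : ℤ) < m) {f f' : Fin n → TIdx}
    {k k' : Fin n} (hf : ∀ j, (hdeg (f j)).natAbs ≤ B) (hf' : ∀ j, (hdeg (f' j)).natAbs ≤ B)
    (h : Function.update f' k' (shiftL m (f' k')) = Function.update f k (shiftL m (f k))) :
    f' = f ∧ k' = k := by
  obtain rfl : k' = k := by
    by_contra hne
    have hk' := congrArg hdeg (congrFun h k')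
    rw [Function.update_self, Function.update_of_ne hne, hdeg_shiftL] at hk'
    have := hf k'
    have := hf' k'
    omega
  refine ⟨funext fun j => ?_, rfl⟩
  by_cases hj : j = k'
  · subst hj
    exact shiftL_injective m (by simpa using congrFun h j)
  · simpa [hj] using congrFun h j

lemma starN_L_apply_update_shiftL {n B : ℕ} {m : ℤ} (hm : (B : ℤ) < m) {v : TN n}
    (hB : ∀ f ∈ v.support, ∀ j, (hdeg (f j)).natAbs ≤ B) {f : Fin n → TIdx}
    (hf : f ∈ v.support) (k : Fin n) :
    starN n (bs (.L m)) v (Function.update f k (shiftL m (f k))) = v f * coeffL m (f k) := by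
  rw [starN_L_apply, Finset.sum_eq_single_of_mem f hf, Fintype.sum_eq_single k, if_pos rfl,
    mul_one]
  · intro k' hk'
    rw [if_neg fun h => hk' (eq_of_update_shiftL_eq hm (hB f hf) (hB f hf) h).2, mul_zero]
  · intro f' hf' hne
    refine mul_eq_zero_of_right _ (Finset.sum_eq_zero fun k' _ => ?_)
    rw [if_neg fun h => hne (eq_of_update_shiftL_eq hm (hB f hf) (hB f' hf') h).1, mul_zero]

lemma exists_natAbs_hdeg_le {n : ℕ} (s : Finset (Fin n → TIdx)) :
    ∃ B : ℕ, ∀ f ∈ s, ∀ j, (hdeg (f j)).natAbs ≤ B :=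
  ⟨s.sup fun f => Finset.univ.sup fun j => (hdeg (f j)).natAbs, fun f hf j =>
    (Finset.le_sup (f := fun j => (hdeg (f j)).natAbs) (Finset.mem_univ j)).trans
      (Finset.le_sup (f := fun f => Finset.univ.sup fun j => (hdeg (f j)).natAbs) hf)⟩

theorem annihilated_n_tensor_in_center_general (n : ℕ) (v : TN n)
    (h : ∀ x : Tsns, starN n x v = 0) :
    v ∈ Submodule.span ℂ {Finsupp.single (fun _ : Fin n => TIdx.M 0) (1 : ℂ)} := by
  obtain ⟨B, hB⟩ := exists_natAbs_hdeg_le v.support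
  have hsupp : ∀ f ∈ v.support, ∀ k, f k = .M 0 := by
    intro f hf k
    by_contra hk
    obtain ⟨m, hm, hc⟩ := exists_lt_coeffL_ne_zero B hk
    have h0 := starN_L_apply_update_shiftL hm hB hf k
    rw [h (bs (.L m)), Finsupp.zero_apply, eq_comm] at h0
    exact mul_ne_zero (Finsupp.mem_support_iff.mp hf) hc h0
  rw [← Set.image_singleton (f := fun i => Finsupp.single i (1 : ℂ)), ← Finsupp.supported_eq_span_single, Finsupp.mem_supported]
  exact fun f hf => funext (hsupp f hf)

/-- if `v ∈ tsns^{⊗n}` (`n ≥ 1`) satisfies `x ∗ v = 0` for all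
`x ∈ tsns`, then `v ∈ (ℂ M₀)^{⊗n}`. -/
theorem annihilated_n_tensor_in_center (n : ℕ) (hn : 1 ≤ n) (v : TN n)
    (h : ∀ x : Tsns, starN n x v = 0) :
    v ∈ Submodule.span ℂ {Finsupp.single (fun _ : Fin n => TIdx.M 0) (1 : ℂ)} :=
  annihilated_n_tensor_in_center_general n v h
end
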